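/- Let 0 < β < 1, θ ≥ 0, γ > 0, π ≥ 0, δ > 0, ρ > 0 satisfy δ(1−β+θ) < ρ < δ(1−β+θ)/(1−β). Set φ := (1−β+θ)/(1−β), δ* := δφ, z̄ := ((δ*+π)/(βγ))^{1/(1−β)}, ū := (ρ − δ(1−β+θ))(1−β)/(δβ(1−β+θ)), g := (δ*−ρ)/β = −[(ρ−δ)(1−β)−δθ]/(β(1−β)), g_h := g/φ. Let c₀, k₀, h₀, μ₀ > 0 satisfy c₀/k₀ = (ρ+π(1−β))/β, ū·h₀^{φ} = z̄·k₀, and ū^β = γ(1−β)k₀^β h₀^{θ−β} c₀^{−β}/(δμ₀). Define c(t) = c₀e^{g t}, k(t) = k₀e^{g t}, u(t) = ū, h(t) = h₀e^{g_h t}, λ(t) = c₀^{−β}e^{([(ρ−δ)(1−β)−δθ]/(1−β))t}, and μ(t) = μ₀·e^{([(ρ−δ)(1−β)−δθ](β−θ)/(β(1−β+θ)))t}. Then for all t: λ = c^{−β}; u^β = γ(1−β)k^β h^{θ−β}·λ/(δμ); k' = γk^β u^{1−β}h^{1−β+θ} − πk − c; h' = δ(1−u)h; λ' = −λγβu^{1−β}k^{β−1}h^{1−β+θ}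 + λ(ρ+π); and μ' = μ(ρ−δ) − (μθδ/(1−β))·u. -/

import Mathlib

/-!
Along the proposed path every variable has the form `a * exp (r * t)`, so each differential
condition reduces to an identity between growth rates, and the static condition at time `t` is
the one at time `0` multiplied by `exp 0`. The rates satisfy `(1 - β + θ) * g_h = (1 - β) * g`,
which makes the marginal product of capital `γ β u^(1-β) k^(β-1) h^(1-β+θ)` constant in time;
`z̄` is chosen exactly so that this constant is `δ* + π`. The Euler equation for `λ` then reads
`-β g = ρ + π - (δ* + π)`, and the accumulation equation for `k` follows from the ratio `c₀ / k₀`.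
-/

open Real

noncomputable section

namespace LucasUzawa

variable {β θ γ pi δ ρ : ℝ}

def phi (β θ : ℝ) : ℝ := (1 - β + θ) / (1 - β)

def deltaStar (β θ δ : ℝ) : ℝ := δ * phi β θ

def zBar (β θ γ pi δ : ℝ) : ℝ :=
  ((deltaStar β θ δ + pi) / (β * γ)) ^ (1 / (1 - β))

def uBar (β θ δ ρ : ℝ) : ℝ :=
  (ρ - δ * (1 - β + θ)) * (1 - β) / (δ * β * (1 - β + θ))

def growthRate (β θ δ ρ : ℝ) : ℝ := (deltaStar β θ δ - ρ) / β

def humanCapitalGrowthRate (β θ δ ρ : ℝ) : ℝ := growthRate β θ δ ρ / phi β θ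

/-- `∂Y/∂k` for the output `Y = γ k^β (u h)^(1-β) h^θ` of the goods sector. -/
def marginalProductOfCapital (β θ γ u k h : ℝ) : ℝ :=
  γ * β * u ^ (1 - β) * k ^ (β - 1) * h ^ (1 - β + θ)

lemma phi_mul_one_sub (hβ : 1 - β ≠ 0) : phi β θ * (1 - β) = 1 - β + θ := by
  unfold phi; field_simp

lemma deltaStar_nonneg (hβ : β < 1) (hθ : 0 ≤ θ) (hδ : 0 ≤ δ) : 0 ≤ deltaStar β θ δ :=
  mul_nonneg hδ (div_nonneg (by linarith) (by linarith))

lemma uBar_nonneg (hβ0 : 0 < β) (hβ1 : β < 1) (hθ : 0 ≤ θ) (hδ : 0 < δ)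
    (hρ : δ * (1 - β + θ) < ρ) : 0 ≤ uBar β θ δ ρ := by
  have : 0 < 1 - β + θ := by linarith
  unfold uBar
  exact div_nonneg (mul_nonneg (by linarith) (by linarith)) (by positivity)

lemma beta_mul_growthRate (hβ : β ≠ 0) :
    β * growthRate β θ δ ρ = deltaStar β θ δ - ρ := by
  unfold growthRate; field_simp

lemma humanCapitalGrowthRate_mul (hβ : 1 - β ≠ 0) (hθ : 1 - β + θ ≠ 0) :
    (1 - β + θ) * humanCapitalGrowthRate β θ δ ρ = (1 - β) * growthRate β θ δ ρ := by
  unfold humanCapitalGrowthRate phi; field_simp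

lemma humanCapitalGrowthRate_eq (hβ0 : β ≠ 0) (hβ1 : 1 - β ≠ 0) (hθ : 1 - β + θ ≠ 0)
    (hδ : δ ≠ 0) : humanCapitalGrowthRate β θ δ ρ = δ * (1 - uBar β θ δ ρ) := by
  unfold humanCapitalGrowthRate growthRate deltaStar phi uBar; field_simp; ring

lemma physicalCapitalPrice_rate_eq (hβ0 : β ≠ 0) (hβ1 : 1 - β ≠ 0) :
    ((ρ - δ) * (1 - β) - δ * θ) / (1 - β) = -(β * growthRate β θ δ ρ) := by
  unfold growthRate deltaStar phi; field_simp; ring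

lemma humanCapitalPrice_rate_eq_mul (hβ0 : β ≠ 0) (hβ1 : 1 - β ≠ 0) (hθ : 1 - β + θ ≠ 0) :
    ((ρ - δ) * (1 - β) - δ * θ) * (β - θ) / (β * (1 - β + θ))
      = (θ - β) * humanCapitalGrowthRate β θ δ ρ := by
  unfold humanCapitalGrowthRate growthRate deltaStar phi; field_simp; ring

lemma humanCapitalPrice_rate_eq_sub (hβ0 : β ≠ 0) (hβ1 : 1 - β ≠ 0) (hθ : 1 - β + θ ≠ 0)
    (hδ : δ ≠ 0) :
    ((ρ - δ) * (1 - β) - δ * θ) * (β - θ) / (β * (1 - β + θ))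
      = ρ - δ - θ * δ / (1 - β) * uBar β θ δ ρ := by
  unfold uBar; field_simp; ring

lemma mul_exp_rpow {a : ℝ} (ha : 0 ≤ a) (x p : ℝ) :
    (a * exp x) ^ p = a ^ p * exp (x * p) := by
  rw [mul_rpow ha (exp_pos x).le, exp_mul]

lemma deriv_eq_mul_of_eq_mul_exp {f : ℝ → ℝ} {a r : ℝ} (hf : ∀ t, f t = a * exp (r * t))
    (t : ℝ) : deriv f t = r * f t := by
  rw [hf t, funext hf, (((hasDerivAt_id' t).const_mul r).exp.const_mul a).deriv]
  ring

lemma marginalProductOfCapital_mul_capital {u k h : ℝ} (hk : 0 < k) :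
    marginalProductOfCapital β θ γ u k h * k
      = β * (γ * k ^ β * u ^ (1 - β) * h ^ (1 - β + θ)) := by
  unfold marginalProductOfCapital
  rw [rpow_sub_one hk.ne']
  field_simp

lemma marginalProductOfCapital_mul_exp {u k h gk gh : ℝ} (hk : 0 ≤ k) (hh : 0 ≤ h)
    (hrates : (β - 1) * gk + (1 - β + θ) * gh = 0) (t : ℝ) :
    marginalProductOfCapital β θ γ u (k * exp (gk * t)) (h * exp (gh * t))
      = marginalProductOfCapital β θ γ u k h := by
  have hexp : exp (gk * t * (β - 1)) * exp (gh * t * (1 - β + θ)) = 1 := by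
    rw [← exp_add, exp_eq_one_iff]
    linear_combination t * hrates
  unfold marginalProductOfCapital
  rw [mul_exp_rpow hk, mul_exp_rpow hh]
  linear_combination (γ * β * u ^ (1 - β) * k ^ (β - 1) * h ^ (1 - β + θ)) * hexp

lemma marginalProductOfCapital_of_eq_zBar (hβ0 : 0 < β) (hβ1 : β < 1) (hθ : 0 ≤ θ)
    (hγ : 0 < γ) (hpi : 0 ≤ pi) (hδ : 0 ≤ δ) {u k h : ℝ} (hu : 0 ≤ u) (hk : 0 < k)
    (hh : 0 ≤ h) (huh : u * h ^ phi β θ = zBar β θ γ pi δ * k) :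
    marginalProductOfCapital β θ γ u k h = deltaStar β θ δ + pi := by
  have hβ1' : 1 - β ≠ 0 := by linarith
  have hS : 0 ≤ (deltaStar β θ δ + pi) / (β * γ) :=
    div_nonneg (add_nonneg (deltaStar_nonneg hβ1 hθ hδ) hpi) (by positivity)
  have hpow :
      u ^ (1 - β) * h ^ (1 - β + θ) = (deltaStar β θ δ + pi) / (β * γ) * k ^ (1 - β) := by
    have := congrArg (· ^ (1 - β)) huh
    rwa [mul_rpow hu (rpow_nonneg hh _), ← rpow_mul hh, phi_mul_one_sub hβ1',
      zBar, mul_rpow (rpow_nonneg hS _) hk.le, ← rpow_mul hS, one_div_mul_cancel hβ1',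
      rpow_one] at this
  have hk1 : k ^ (1 - β) * k ^ (β - 1) = 1 := by
    rw [← rpow_add hk]; norm_num
  unfold marginalProductOfCapital
  calc γ * β * u ^ (1 - β) * k ^ (β - 1) * h ^ (1 - β + θ)
      = γ * β * (u ^ (1 - β) * h ^ (1 - β + θ)) * k ^ (β - 1) := by ring
    _ = deltaStar β θ δ + pi := by
      rw [hpow]; field_simp; linear_combination (deltaStar β θ δ + pi) * hk1

lemma marginalProductOfCapital_balancedPath (hβ0 : 0 < β) (hβ1 : β < 1) (hθ : 0 ≤ θ)
    (hγ : 0 < γ) (hpi : 0 ≤ pi) (hδ : 0 < δ) (hρ : δ * (1 - β + θ) < ρ) {k0 h0 : ℝ}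
    (hk0 : 0 < k0) (hh0 : 0 < h0) (huh : uBar β θ δ ρ * h0 ^ phi β θ = zBar β θ γ pi δ * k0)
    (t : ℝ) :
    marginalProductOfCapital β θ γ (uBar β θ δ ρ) (k0 * exp (growthRate β θ δ ρ * t))
      (h0 * exp (humanCapitalGrowthRate β θ δ ρ * t)) = deltaStar β θ δ + pi := by
  have hrates : (1 - β + θ) * humanCapitalGrowthRate β θ δ ρ = (1 - β) * growthRate β θ δ ρ :=
    humanCapitalGrowthRate_mul (by linarith) (by linarith)
  rw [marginalProductOfCapital_mul_exp hk0.le hh0.le (by linear_combination hrates)]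
  exact marginalProductOfCapital_of_eq_zBar hβ0 hβ1 hθ hγ hpi hδ.le
    (uBar_nonneg hβ0 hβ1 hθ hδ hρ) hk0 hh0.le huh

lemma static_condition_mul_exp {u k h c μ gk gh : ℝ} (hk : 0 ≤ k) (hh : 0 ≤ h)
    (h0 : u ^ β = γ * (1 - β) * k ^ β * h ^ (θ - β) * c ^ (-β) / (δ * μ)) (t : ℝ) :
    u ^ β = γ * (1 - β) * (k * exp (gk * t)) ^ β * (h * exp (gh * t)) ^ (θ - β)
      * (c ^ (-β) * exp (-(β * gk) * t)) / (δ * (μ * exp ((θ - β) * gh * t))) := by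
  have hE : exp (gk * t * β) * exp (-(β * gk) * t) = 1 := by
    rw [← exp_add, exp_eq_one_iff]; ring
  have hE' : exp (gh * t * (θ - β)) = exp ((θ - β) * gh * t) := by ring_nf
  rw [mul_exp_rpow hk, mul_exp_rpow hh, hE', h0,
    ← mul_div_mul_right _ (δ * μ) (exp_ne_zero ((θ - β) * gh * t))]
  congr 1
  · linear_combination
      -(γ * (1 - β) * k ^ β * h ^ (θ - β) * c ^ (-β) * exp ((θ - β) * gh * t)) * hE
  · ring

lemma deriv_capital_eq {k c : ℝ → ℝ} {u h k0 c0 : ℝ} (hβ : 0 < β) (hk0 : 0 < k0)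
    (hk : ∀ t, k t = k0 * exp (growthRate β θ δ ρ * t))
    (hc : ∀ t, c t = c0 * exp (growthRate β θ δ ρ * t))
    (hck : c0 / k0 = (ρ + pi * (1 - β)) / β) (t : ℝ)
    (hmpk : marginalProductOfCapital β θ γ u (k t) h = deltaStar β θ δ + pi) :
    deriv k t = γ * k t ^ β * u ^ (1 - β) * h ^ (1 - β + θ) - pi * k t - c t := by
  have hc' : β * c t = (ρ + pi * (1 - β)) * k t := by
    rw [div_eq_div_iff hk0.ne' hβ.ne'] at hck
    rw [hc, hk]
    linear_combination exp (growthRate β θ δ ρ * t) * hck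
  have hY := marginalProductOfCapital_mul_capital (β := β) (θ := θ) (γ := γ) (u := u) (h := h)
    (show 0 < k t by rw [hk]; positivity)
  rw [hmpk] at hY
  refine mul_left_cancel₀ hβ.ne' ?_
  rw [deriv_eq_mul_of_eq_mul_exp hk]
  linear_combination k t * beta_mul_growthRate (θ := θ) (δ := δ) (ρ := ρ) hβ.ne' + hY + hc'

lemma deriv_physicalCapitalPrice_eq {lam : ℝ → ℝ} {a u k h : ℝ} (hβ : β ≠ 0)
    (hlam : ∀ t, lam t = a * exp (-(β * growthRate β θ δ ρ) * t)) (t : ℝ)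
    (hmpk : marginalProductOfCapital β θ γ u k h = deltaStar β θ δ + pi) :
    deriv lam t = -(lam t) * γ * β * u ^ (1 - β) * k ^ (β - 1) * h ^ (1 - β + θ)
      + lam t * (ρ + pi) := by
  unfold marginalProductOfCapital at hmpk
  rw [deriv_eq_mul_of_eq_mul_exp hlam]
  linear_combination lam t * hmpk - lam t * beta_mul_growthRate (θ := θ) (δ := δ) (ρ := ρ) hβ

end LucasUzawa

end

open LucasUzawa

theorem sigma_eq_beta_first_solution_general (β θ γ pi δ ρ : ℝ)
    (hβ0 : 0 < β) (hβ1 : β < 1) (hθ : 0 ≤ θ) (hγ : 0 < γ) (hpi : 0 ≤ pi)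
    (hδ : 0 < δ)
    (hρ1 : δ * (1 - β + θ) < ρ)
    (φ δs zbar ubar g gh : ℝ)
    (hφ : φ = (1 - β + θ) / (1 - β)) (hδs : δs = δ * φ)
    (hzbar : zbar = ((δs + pi) / (β * γ)) ^ (1 / (1 - β)))
    (hubar : ubar = (ρ - δ * (1 - β + θ)) * (1 - β) / (δ * β * (1 - β + θ)))
    (hg : g = (δs - ρ) / β) (hgh : gh = g / φ)
    (c0 k0 h0 μ0 : ℝ)
    (hc0 : 0 < c0) (hk0 : 0 < k0) (hh0 : 0 < h0)
    (hck : c0 / k0 = (ρ + pi * (1 - β)) / β)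
    (huh : ubar * h0 ^ φ = zbar * k0)
    (hfoc0 : ubar ^ β = γ * (1 - β) * k0 ^ β * h0 ^ (θ - β) * c0 ^ (-β) / (δ * μ0))
    (c k u h lam μ : ℝ → ℝ)
    (hc : ∀ t, c t = c0 * Real.exp (g * t))
    (hk : ∀ t, k t = k0 * Real.exp (g * t))
    (hu : ∀ t, u t = ubar)
    (hh : ∀ t, h t = h0 * Real.exp (gh * t))
    (hlam : ∀ t, lam t = c0 ^ (-β)
      * Real.exp (((ρ - δ) * (1 - β) - δ * θ) / (1 - β) * t))
    (hμ : ∀ t, μ t = μ0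
      * Real.exp (((ρ - δ) * (1 - β) - δ * θ) * (β - θ) / (β * (1 - β + θ)) * t)) :
    (∀ t, lam t = c t ^ (-β)) ∧
    (∀ t, u t ^ β = γ * (1 - β) * k t ^ β * h t ^ (θ - β) * lam t / (δ * μ t)) ∧
    (∀ t, deriv k t
      = γ * k t ^ β * u t ^ (1 - β) * h t ^ (1 - β + θ) - pi * k t - c t) ∧
    (∀ t, deriv h t = δ * (1 - u t) * h t) ∧
    (∀ t, deriv lam t
      = -(lam t) * γ * β * u t ^ (1 - β) * k t ^ (β - 1) * h t ^ (1 - β + θ)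
        + lam t * (ρ + pi)) ∧
    (∀ t, deriv μ t = μ t * (ρ - δ) - μ t * θ * δ / (1 - β) * u t) := by
  have hβ1' : 1 - β ≠ 0 := by linarith
  have hθ' : 1 - β + θ ≠ 0 := by linarith
  obtain rfl : φ = phi β θ := hφ
  obtain rfl : δs = deltaStar β θ δ := hδs
  obtain rfl : zbar = zBar β θ γ pi δ := hzbar
  obtain rfl : ubar = uBar β θ δ ρ := hubar
  obtain rfl : g = growthRate β θ δ ρ := hg
  obtain rfl : gh = humanCapitalGrowthRate β θ δ ρ := hgh
  rw [physicalCapitalPrice_rate_eq hβ0.ne' hβ1'] at hlam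
  have hmpk (t : ℝ) :
      marginalProductOfCapital β θ γ (u t) (k t) (h t) = deltaStar β θ δ + pi := by
    rw [hu, hk, hh]
    exact marginalProductOfCapital_balancedPath hβ0 hβ1 hθ hγ hpi hδ hρ1 hk0 hh0 huh t
  refine ⟨fun t => ?_, fun t => ?_, fun t => ?_, fun t => ?_, fun t => ?_, fun t => ?_⟩
  · rw [hlam, hc, mul_exp_rpow hc0.le]
    ring_nf
  · rw [hu, hk, hh, hlam, hμ, humanCapitalPrice_rate_eq_mul hβ0.ne' hβ1' hθ']
    exact static_condition_mul_exp hk0.le hh0.le hfoc0 t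
  · exact deriv_capital_eq hβ0 hk0 hk hc hck t (hmpk t)
  · rw [deriv_eq_mul_of_eq_mul_exp hh, hu, humanCapitalGrowthRate_eq hβ0.ne' hβ1' hθ' hδ.ne']
  · exact deriv_physicalCapitalPrice_eq hβ0.ne' hlam t (hmpk t)
  · rw [deriv_eq_mul_of_eq_mul_exp hμ, hu,
      humanCapitalPrice_rate_eq_sub hβ0.ne' hβ1' hθ' hδ.ne']
    ring

/-- The first closed-form solution (Ruiz-Tamarit solution) of the Lucas-Uzawa
model with externalities in the case σ = β satisfies all first-order conditions
of the original model. -/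
theorem sigma_eq_beta_first_solution (β θ γ pi δ ρ : ℝ)
    (hβ0 : 0 < β) (hβ1 : β < 1) (hθ : 0 ≤ θ) (hγ : 0 < γ) (hpi : 0 ≤ pi)
    (hδ : 0 < δ) (hρ : 0 < ρ)
    (hρ1 : δ * (1 - β + θ) < ρ) (hρ2 : ρ < δ * (1 - β + θ) / (1 - β))
    (φ δs zbar ubar g gh : ℝ)
    (hφ : φ = (1 - β + θ) / (1 - β)) (hδs : δs = δ * φ)
    (hzbar : zbar = ((δs + pi) / (β * γ)) ^ (1 / (1 - β)))
    (hubar : ubar = (ρ - δ * (1 - β + θ)) * (1 - β) / (δ * β * (1 - β + θ)))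
    (hg : g = (δs - ρ) / β) (hgh : gh = g / φ)
    (c0 k0 h0 μ0 : ℝ)
    (hc0 : 0 < c0) (hk0 : 0 < k0) (hh0 : 0 < h0) (hμ0 : 0 < μ0)
    (hck : c0 / k0 = (ρ + pi * (1 - β)) / β)
    (huh : ubar * h0 ^ φ = zbar * k0)
    (hfoc0 : ubar ^ β = γ * (1 - β) * k0 ^ β * h0 ^ (θ - β) * c0 ^ (-β) / (δ * μ0))
    (c k u h lam μ : ℝ → ℝ)
    (hc : ∀ t, c t = c0 * Real.exp (g * t))
    (hk : ∀ t, k t = k0 * Real.exp (g * t))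
    (hu : ∀ t, u t = ubar)
    (hh : ∀ t, h t = h0 * Real.exp (gh * t))
    (hlam : ∀ t, lam t = c0 ^ (-β)
      * Real.exp (((ρ - δ) * (1 - β) - δ * θ) / (1 - β) * t))
    (hμ : ∀ t, μ t = μ0
      * Real.exp (((ρ - δ) * (1 - β) - δ * θ) * (β - θ) / (β * (1 - β + θ)) * t)) :
    (∀ t, lam t = c t ^ (-β)) ∧
    (∀ t, u t ^ β = γ * (1 - β) * k t ^ β * h t ^ (θ - β) * lam t / (δ * μ t)) ∧
    (∀ t, deriv k t
      = γ * k t ^ β * u t ^ (1 - β) * h t ^ (1 - β + θ) - pi * k t - c t) ∧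
    (∀ t, deriv h t = δ * (1 - u t) * h t) ∧
    (∀ t, deriv lam t
      = -(lam t) * γ * β * u t ^ (1 - β) * k t ^ (β - 1) * h t ^ (1 - β + θ)
        + lam t * (ρ + pi)) ∧
    (∀ t, deriv μ t = μ t * (ρ - δ) - μ t * θ * δ / (1 - β) * u t) :=
  sigma_eq_beta_first_solution_general β θ γ pi δ ρ hβ0 hβ1 hθ hγ hpi hδ hρ1 φ δs zbar ubar g gh hφ
    hδs hzbar hubar hg hgh c0 k0 h0 μ0 hc0 hk0 hh0 hck huh hfoc0 c k u h lam μ hc hk hu hh hlam hμ
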